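/- Let X be a real random variable with density p such that C^α := ∫ p(x)^α / φ(x)^{α-1} dx < ∞, with α > 1 and β = α/(α-1). Then for all real t, E e^{tX} ≤ C e^{β t²/2}, and consequently P(X ≥ r) ≤ C e^{-r²/(2β)} for all r ≥ 0. -/

import Mathlib

open MeasureTheory Real

/-- The standard normal density on the real line. -/
noncomputable def stdNormalPDF (x : ℝ) : ℝ :=
  (Real.sqrt (2 * Real.pi))⁻¹ * Real.exp (-x ^ 2 / 2)

/-!
Write `e^{tx} p = (p φ^{-1/β}) (e^{tx} φ^{1/β})` and apply Hölder: the first factor has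
`L^α` norm `C`, and the `β`-th power of the second is `e^{βtx} φ`, whose integral is
`e^{β²t²/2}` by completing the square. The tail bound is Chernoff's inequality at `t = r/β`.
-/

open ENNReal ProbabilityTheory

lemma stdNormalPDF_pos (x : ℝ) : 0 < stdNormalPDF x := by
  unfold stdNormalPDF; positivity

@[fun_prop]
lemma measurable_stdNormalPDF : Measurable stdNormalPDF := by
  unfold stdNormalPDF; fun_prop

/-- Completing the square. -/
lemma exp_mul_mul_stdNormalPDF (c x : ℝ) :
    exp (c * x) * stdNormalPDF x = exp (c ^ 2 / 2) * gaussianPDFReal c 1 x := by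
  unfold stdNormalPDF gaussianPDFReal
  rw [NNReal.coe_one, mul_one, mul_one, mul_left_comm, ← exp_add, mul_left_comm, ← exp_add]
  ring_nf

lemma lintegral_exp_mul_mul_stdNormalPDF (c : ℝ) :
    ∫⁻ x, ENNReal.ofReal (exp (c * x) * stdNormalPDF x) =
      ENNReal.ofReal (exp (c ^ 2 / 2)) := by
  simp_rw [exp_mul_mul_stdNormalPDF, ENNReal.ofReal_mul (exp_nonneg _)]
  rw [lintegral_const_mul _ (by fun_prop), lintegral_gaussianPDFReal_eq_one c one_ne_zero, mul_one]

/-- Hölder applied to the factorisation `f g = (f w^{-1/b}) (g w^{1/b})`. -/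
lemma lintegral_mul_le_weighted_Lp_mul_Lq {Ω : Type*} [MeasurableSpace Ω] (μ : Measure Ω)
    {a b : ℝ} (hab : a.HolderConjugate b) {f g w : Ω → ℝ} (hf : Measurable f)
    (hg : Measurable g) (hw : Measurable w) (hf0 : ∀ x, 0 ≤ f x) (hg0 : ∀ x, 0 ≤ g x)
    (hw0 : ∀ x, 0 < w x) :
    ∫⁻ x, ENNReal.ofReal (f x * g x) ∂μ ≤
      (∫⁻ x, ENNReal.ofReal (f x ^ a / w x ^ (a - 1)) ∂μ) ^ (1 / a) *
        (∫⁻ x, ENNReal.ofReal (g x ^ b * w x) ∂μ) ^ (1 / b) := by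
  set F : Ω → ℝ≥0∞ := fun x => ENNReal.ofReal (f x / w x ^ b⁻¹)
  set G : Ω → ℝ≥0∞ := fun x => ENNReal.ofReal (g x * w x ^ b⁻¹)
  have hw_pow_pos (x : Ω) : 0 < w x ^ b⁻¹ := rpow_pos_of_pos (hw0 x) _
  have hFG (x : Ω) : ENNReal.ofReal (f x * g x) = F x * G x := by
    rw [← ENNReal.ofReal_mul (div_nonneg (hf0 x) (hw_pow_pos x).le)]
    congr 1
    field_simp [(hw_pow_pos x).ne']
  have hF (x : Ω) : F x ^ a = ENNReal.ofReal (f x ^ a / w x ^ (a - 1)) := by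
    rw [ENNReal.ofReal_rpow_of_nonneg (div_nonneg (hf0 x) (hw_pow_pos x).le) hab.nonneg,
      div_rpow (hf0 x) (hw_pow_pos x).le, ← rpow_mul (hw0 x).le, mul_comm, ← div_eq_mul_inv,
      hab.div_conj_eq_sub_one]
  have hG (x : Ω) : G x ^ b = ENNReal.ofReal (g x ^ b * w x) := by
    rw [ENNReal.ofReal_rpow_of_nonneg (mul_nonneg (hg0 x) (hw_pow_pos x).le) hab.symm.nonneg,
      mul_rpow (hg0 x) (hw_pow_pos x).le, ← rpow_mul (hw0 x).le,
      inv_mul_cancel₀ hab.symm.ne_zero, Real.rpow_one]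
  calc ∫⁻ x, ENNReal.ofReal (f x * g x) ∂μ = ∫⁻ x, (F * G) x ∂μ := lintegral_congr hFG
    _ ≤ (∫⁻ x, F x ^ a ∂μ) ^ (1 / a) * (∫⁻ x, G x ^ b ∂μ) ^ (1 / b) :=
      ENNReal.lintegral_mul_le_Lp_mul_Lq μ hab (by fun_prop) (by fun_prop)
    _ = _ := by simp_rw [hF, hG]

/-- `1_{x ≥ r} ≤ e^{t(x - r)}` for `t ≥ 0`. -/
lemma setLIntegral_Ici_le_exp_mul_lintegral {p : ℝ → ℝ} (hp : ∀ x, 0 ≤ p x) {t : ℝ}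
    (ht : 0 ≤ t) (r : ℝ) :
    ∫⁻ x in {x : ℝ | r ≤ x}, ENNReal.ofReal (p x) ≤
      ENNReal.ofReal (exp (-(t * r))) * ∫⁻ x, ENNReal.ofReal (exp (t * x) * p x) := by
  rw [← lintegral_const_mul' _ _ ofReal_ne_top]
  refine (setLIntegral_mono' measurableSet_Ici fun x hx => ?_).trans
    (setLIntegral_le_lintegral _ _)
  rw [← ENNReal.ofReal_mul (exp_nonneg _), ← mul_assoc, ← exp_add]
  refine ENNReal.ofReal_le_ofReal (le_mul_of_one_le_left (hp x) (one_le_exp ?_))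
  nlinarith [show r ≤ x from hx]

lemma lintegral_exp_mul_mul_le_of_lintegral_rpow_div_eq {α β C : ℝ}
    (hab : α.HolderConjugate β) (hC : 0 ≤ C) {p : ℝ → ℝ} (hpm : Measurable p)
    (hp : ∀ x, 0 ≤ p x)
    (hCα : ∫⁻ x, ENNReal.ofReal (p x ^ α / stdNormalPDF x ^ (α - 1)) = ENNReal.ofReal C ^ α)
    (t : ℝ) :
    ∫⁻ x, ENNReal.ofReal (exp (t * x) * p x) ≤ ENNReal.ofReal (C * exp (β * t ^ 2 / 2)) := by
  have hgauss : ∫⁻ x, ENNReal.ofReal (exp (t * x) ^ β * stdNormalPDF x)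
      = ENNReal.ofReal (exp ((β * t) ^ 2 / 2)) := by
    simp_rw [← exp_mul, mul_comm _ β, ← mul_assoc]
    exact lintegral_exp_mul_mul_stdNormalPDF (β * t)
  calc ∫⁻ x, ENNReal.ofReal (exp (t * x) * p x)
        = ∫⁻ x, ENNReal.ofReal (p x * exp (t * x)) := by simp_rw [mul_comm]
    _ ≤ _ := lintegral_mul_le_weighted_Lp_mul_Lq volume hab hpm (by fun_prop)
        measurable_stdNormalPDF hp (fun x => exp_nonneg _) stdNormalPDF_pos
    _ = ENNReal.ofReal C * ENNReal.ofReal (exp (β * t ^ 2 / 2)) := by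
        rw [hCα, hgauss, ← ENNReal.rpow_mul, mul_one_div_cancel hab.ne_zero, ENNReal.rpow_one,
          ofReal_rpow_of_nonneg (exp_nonneg _) hab.symm.one_div_nonneg, ← exp_mul]
        congr 3
        field_simp
    _ = ENNReal.ofReal (C * exp (β * t ^ 2 / 2)) := (ENNReal.ofReal_mul hC).symm

lemma setLIntegral_Ici_le_of_lintegral_exp_mul_le {p : ℝ → ℝ} (hp : ∀ x, 0 ≤ p x)
    {β C : ℝ} (hβ : 0 < β)
    (hmgf : ∀ t, ∫⁻ x, ENNReal.ofReal (exp (t * x) * p x) ≤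
      ENNReal.ofReal (C * exp (β * t ^ 2 / 2)))
    {r : ℝ} (hr : 0 ≤ r) :
    ∫⁻ x in {x : ℝ | r ≤ x}, ENNReal.ofReal (p x) ≤
      ENNReal.ofReal (C * exp (-r ^ 2 / (2 * β))) :=
  calc ∫⁻ x in {x : ℝ | r ≤ x}, ENNReal.ofReal (p x)
      ≤ ENNReal.ofReal (exp (-(r / β * r))) *
          ∫⁻ x, ENNReal.ofReal (exp (r / β * x) * p x) :=
        setLIntegral_Ici_le_exp_mul_lintegral hp (div_nonneg hr hβ.le) r
    _ ≤ ENNReal.ofReal (exp (-(r / β * r))) *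
          ENNReal.ofReal (C * exp (β * (r / β) ^ 2 / 2)) :=
        mul_le_mul_right (hmgf _) _
    _ = ENNReal.ofReal (C * exp (-r ^ 2 / (2 * β))) := by
        rw [← ENNReal.ofReal_mul (exp_nonneg _), mul_left_comm, ← exp_add]
        congr 3
        field_simp
        ring

theorem laplace_transform_bound_general (α β C : ℝ) (hα : 1 < α) (hβ : β = α / (α - 1)) (hC : 0 ≤ C)
    (p : ℝ → ℝ) (hpm : Measurable p) (hp : ∀ x, 0 ≤ p x)
    (hfin : Integrable (fun x => p x ^ α / stdNormalPDF x ^ (α - 1)))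
    (hCdef : (∫ x, p x ^ α / stdNormalPDF x ^ (α - 1)) = C ^ α) :
    (∀ t : ℝ, (∫⁻ x, ENNReal.ofReal (Real.exp (t * x) * p x))
        ≤ ENNReal.ofReal (C * Real.exp (β * t ^ 2 / 2))) ∧
    (∀ r : ℝ, 0 ≤ r →
      (∫⁻ x in {x : ℝ | r ≤ x}, ENNReal.ofReal (p x))
        ≤ ENNReal.ofReal (C * Real.exp (-r ^ 2 / (2 * β)))) := by
  have hab : α.HolderConjugate β := (holderConjugate_iff_eq_conjExponent hα).2 hβ
  have hCα : ∫⁻ x, ENNReal.ofReal (p x ^ α / stdNormalPDF x ^ (α - 1)) =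
      ENNReal.ofReal C ^ α := by
    rw [← ofReal_integral_eq_lintegral_ofReal hfin (ae_of_all _ fun x =>
      div_nonneg (rpow_nonneg (hp x) α) (rpow_nonneg (stdNormalPDF_pos x).le _)), hCdef,
      ofReal_rpow_of_nonneg hC hab.nonneg]
  have hmgf := lintegral_exp_mul_mul_le_of_lintegral_rpow_div_eq hab hC hpm hp hCα
  exact ⟨hmgf, fun r hr => setLIntegral_Ici_le_of_lintegral_exp_mul_le hp hab.symm.pos hmgf hr⟩

/-- If `X` has density `p` with `∫ p^α / φ^{α-1} = C^α < ∞` (`α > 1`, `β = α/(α-1)`),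
then `E e^{tX} ≤ C e^{β t²/2}` for all `t`, and `P(X ≥ r) ≤ C e^{-r²/(2β)}` for `r ≥ 0`. -/
theorem laplace_transform_bound (α β C : ℝ) (hα : 1 < α) (hβ : β = α / (α - 1)) (hC : 0 ≤ C)
    (p : ℝ → ℝ) (hpm : Measurable p) (hp : ∀ x, 0 ≤ p x) (hdens : (∫ x, p x) = 1)
    (hfin : Integrable (fun x => p x ^ α / stdNormalPDF x ^ (α - 1)))
    (hCdef : (∫ x, p x ^ α / stdNormalPDF x ^ (α - 1)) = C ^ α) :
    (∀ t : ℝ, (∫⁻ x, ENNReal.ofReal (Real.exp (t * x) * p x))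
        ≤ ENNReal.ofReal (C * Real.exp (β * t ^ 2 / 2))) ∧
    (∀ r : ℝ, 0 ≤ r →
      (∫⁻ x in {x : ℝ | r ≤ x}, ENNReal.ofReal (p x))
        ≤ ENNReal.ofReal (C * Real.exp (-r ^ 2 / (2 * β)))) :=
  laplace_transform_bound_general α β C hα hβ hC p hpm hp hfin hCdef
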